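/- Correct first selection of GARD in the outlier-only case: let Q ∈ ℝ^{n×m} have orthonormal columns (QᵀQ = Iₘ), let u₀ ∈ ℝⁿ be s-sparse with nonempty support S, and let δ ∈ [0,1] satisfy the principal-angle bound for sparsity level s. If δ² < min{|u₀ᵢ| : i ∈ S} / (2 ‖u₀‖₂), then the initial GARD residual r⁰ = (Iₙ − QQᵀ)(Qw₀ + u₀) = (Iₙ − QQᵀ)u₀ satisfies |r⁰ᵢ| > |r⁰ⱼ| for every i ∈ S and every j ∉ S; hence the index of largest residual magnitude belongs to the outlier support S. -/

import Mathlib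

open Matrix

/-- Euclidean (ℓ₂) norm of a finitely-indexed real vector. -/
noncomputable def norm2 {ι : Type*} [Fintype ι] (v : ι → ℝ) : ℝ :=
  Real.sqrt (∑ i, v i ^ 2)

/-- A vector of `ℝⁿ` is `s`-sparse if it has at most `s` nonzero entries. -/
def Sparse {n : ℕ} (s : ℕ) (v : Fin n → ℝ) : Prop :=
  ∃ T : Finset (Fin n), T.card ≤ s ∧ ∀ i ∉ T, v i = 0

/-- `δ` satisfies the principal-angle bound for `Q` at sparsity level `s`:
`|⟨Qw, v⟩| ≤ δ ‖Qw‖₂ ‖v‖₂` for every `w` and every `s`-sparse `v`. -/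
def PABound {n m : ℕ} (Q : Matrix (Fin n) (Fin m) ℝ) (s : ℕ) (δ : ℝ) : Prop :=
  ∀ (w : Fin m → ℝ) (v : Fin n → ℝ), Sparse s v →
    |Q.mulVec w ⬝ᵥ v| ≤ δ * norm2 (Q.mulVec w) * norm2 v

/-- The `n × |S|` matrix `I_S` whose columns are the standard basis vectors `e_j`, `j ∈ S`. -/
def colSel {n : ℕ} (S : Finset (Fin n)) : Matrix (Fin n) {i // i ∈ S} ℝ :=
  Matrix.of fun i j => if i = (j : Fin n) then 1 else 0

/-- `F_S(a) = I_S I_Sᵀ a`: the vector agreeing with `a` on `S` and zero elsewhere. -/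
def restrictVec {n : ℕ} (S : Finset (Fin n)) (a : Fin n → ℝ) : Fin n → ℝ :=
  fun i => if i ∈ S then a i else 0


/-! `r⁰ = u₀ - p` with `p = QQᵀu₀`. Since `p` is an orthogonal projection of the `s`-sparse `u₀`,
`‖p‖² = ⟨p, u₀⟩ ≤ δ ‖p‖ ‖u₀‖`, so `‖p‖ ≤ δ ‖u₀‖`; testing `p` against the `1`-sparse basis vectors
gives `|pₖ| ≤ δ ‖p‖ ≤ δ² ‖u₀‖ < min_S |u₀| / 2`. Off `S` the residual is `-p`, on `S` it is
at least `|u₀ᵢ| - |pᵢ|`, and the hypothesis separates the two. -/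

section Norm2

variable {ι : Type*} [Fintype ι]

theorem norm2_nonneg (v : ι → ℝ) : 0 ≤ norm2 v :=
  Real.sqrt_nonneg _

theorem norm2_sq (v : ι → ℝ) : norm2 v ^ 2 = v ⬝ᵥ v := by
  rw [norm2, Real.sq_sqrt (by positivity)]
  simp only [dotProduct, sq]

theorem norm2_pos {v : ι → ℝ} (hv : v ≠ 0) : 0 < norm2 v := by
  obtain ⟨i, hi⟩ := Function.ne_iff.1 hv
  exact Real.sqrt_pos.2 <|
    Finset.sum_pos' (fun _ _ => sq_nonneg _) ⟨i, Finset.mem_univ i, sq_pos_of_ne_zero hi⟩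

theorem norm2_single [DecidableEq ι] (k : ι) : norm2 (Pi.single k (1 : ℝ)) = 1 := by
  rw [← Real.sqrt_one, norm2]
  congr 1
  rw [Finset.sum_eq_single k (fun i _ hi => by simp [hi]) (by simp)]
  simp

end Norm2

theorem sparse_single {n s : ℕ} (hs : 1 ≤ s) (k : Fin n) : Sparse s (Pi.single k (1 : ℝ)) :=
  ⟨{k}, by simpa using hs, fun _ hi => Pi.single_eq_of_ne (Finset.notMem_singleton.1 hi) _⟩

section Projection

variable {ι κ R : Type*} [Fintype ι] [Fintype κ] [CommRing R] {Q : Matrix ι κ R}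

theorem mulVec_dotProduct_eq (z : κ → R) (v : ι → R) : Q *ᵥ z ⬝ᵥ v = z ⬝ᵥ Qᵀ *ᵥ v := by
  rw [dotProduct_comm, dotProduct_mulVec, ← mulVec_transpose, dotProduct_comm]

theorem dotProduct_proj_self [DecidableEq κ] (hQ : Qᵀ * Q = 1) (u : ι → R) :
    Q *ᵥ (Qᵀ *ᵥ u) ⬝ᵥ u = Q *ᵥ (Qᵀ *ᵥ u) ⬝ᵥ Q *ᵥ (Qᵀ *ᵥ u) := by
  rw [mulVec_dotProduct_eq _ (Q *ᵥ _), mulVec_mulVec _ Qᵀ, hQ, one_mulVec, mulVec_dotProduct_eq]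

theorem sub_proj_mulVec_add [DecidableEq κ] (hQ : Qᵀ * Q = 1) (w : κ → R) (u : ι → R) :
    (Q *ᵥ w + u) - Q *ᵥ (Qᵀ *ᵥ (Q *ᵥ w + u)) = u - Q *ᵥ (Qᵀ *ᵥ u) := by
  rw [mulVec_add, mulVec_mulVec _ Qᵀ, hQ, one_mulVec, mulVec_add]
  abel

end Projection

namespace PABound

variable {n m s : ℕ} {Q : Matrix (Fin n) (Fin m) ℝ} {δ : ℝ}

theorem abs_mulVec_apply_le (hPA : PABound Q s δ) (hs : 1 ≤ s) (w : Fin m → ℝ) (k : Fin n) :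
    |(Q *ᵥ w) k| ≤ δ * norm2 (Q *ᵥ w) := by
  simpa [dotProduct_single, norm2_single] using hPA w _ (sparse_single hs k)

theorem norm2_proj_le (hPA : PABound Q s δ) (hδ : 0 ≤ δ) (hQ : Qᵀ * Q = 1) {u : Fin n → ℝ}
    (hu : Sparse s u) : norm2 (Q *ᵥ (Qᵀ *ᵥ u)) ≤ δ * norm2 u := by
  set p := Q *ᵥ (Qᵀ *ᵥ u)
  have hp : norm2 p * norm2 p ≤ δ * norm2 u * norm2 p :=
    calc norm2 p * norm2 p = p ⬝ᵥ u := by rw [← sq, norm2_sq, dotProduct_proj_self hQ]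
      _ ≤ |p ⬝ᵥ u| := le_abs_self _
      _ ≤ δ * norm2 p * norm2 u := hPA _ u hu
      _ = δ * norm2 u * norm2 p := by ring
  rcases (norm2_nonneg p).eq_or_lt with h0 | h0
  · rw [← h0]
    exact mul_nonneg hδ (norm2_nonneg u)
  · exact le_of_mul_le_mul_right hp h0

theorem abs_proj_apply_le (hPA : PABound Q s δ) (hδ : 0 ≤ δ) (hQ : Qᵀ * Q = 1) (hs : 1 ≤ s)
    {u : Fin n → ℝ} (hu : Sparse s u) (k : Fin n) :
    |(Q *ᵥ (Qᵀ *ᵥ u)) k| ≤ δ ^ 2 * norm2 u :=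
  calc |(Q *ᵥ (Qᵀ *ᵥ u)) k| ≤ δ * norm2 (Q *ᵥ (Qᵀ *ᵥ u)) := hPA.abs_mulVec_apply_le hs _ k
    _ ≤ δ * (δ * norm2 u) := mul_le_mul_of_nonneg_left (hPA.norm2_proj_le hδ hQ hu) hδ
    _ = δ ^ 2 * norm2 u := by ring

end PABound

theorem stmt10_general {n m s : ℕ} (Q : Matrix (Fin n) (Fin m) ℝ) (hQ : Qᵀ * Q = 1)
    (δ : ℝ) (hδ0 : 0 ≤ δ) (hPA : PABound Q s δ)
    (u₀ : Fin n → ℝ) (S : Finset (Fin n)) (hsupp : ∀ i, i ∈ S ↔ u₀ i ≠ 0)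
    (hSne : S.Nonempty) (hcard : S.card ≤ s)
    (hbound : δ ^ 2 < S.inf' hSne (fun i => |u₀ i|) / (2 * norm2 u₀))
    (w₀ : Fin m → ℝ) (r₀ : Fin n → ℝ)
    (hr₀ : r₀ = (Q.mulVec w₀ + u₀) - Q.mulVec (Qᵀ.mulVec (Q.mulVec w₀ + u₀))) :
    ∀ i ∈ S, ∀ j ∉ S, |r₀ j| < |r₀ i| := by
  intro i hi j hj
  have hsparse : Sparse s u₀ := ⟨S, hcard, fun k hk => not_not.1 (mt (hsupp k).2 hk)⟩
  have hs : 1 ≤ s := (Finset.card_pos.2 hSne).trans_le hcard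
  have hp := hPA.abs_proj_apply_le hδ0 hQ hs hsparse
  have hui : S.inf' hSne (fun i => |u₀ i|) ≤ |u₀ i| := Finset.inf'_le _ hi
  have huj : u₀ j = 0 := not_not.1 (mt (hsupp j).2 hj)
  have hnorm : 0 < norm2 u₀ := norm2_pos fun h => (hsupp i).1 hi (congrFun h i)
  rw [lt_div_iff₀ (by positivity)] at hbound
  rw [hr₀, sub_proj_mulVec_add hQ]
  simp only [Pi.sub_apply, huj, zero_sub, abs_neg]
  linarith [abs_sub_abs_le_abs_sub (u₀ i) ((Q *ᵥ (Qᵀ *ᵥ u₀)) i), hp i, hp j]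

/-- Correct first selection of GARD in the outlier-only case: if
`δ² < min_{i ∈ S} |u₀ᵢ| / (2‖u₀‖₂)`, then the initial residual
`r⁰ = (I − QQᵀ)(Qw₀ + u₀)` satisfies `|r⁰ᵢ| > |r⁰ⱼ|` for every `i ∈ S`, `j ∉ S`. -/
theorem stmt10 {n m s : ℕ} (Q : Matrix (Fin n) (Fin m) ℝ) (hQ : Qᵀ * Q = 1)
    (δ : ℝ) (hδ0 : 0 ≤ δ) (hδ1 : δ ≤ 1) (hPA : PABound Q s δ)
    (u₀ : Fin n → ℝ) (S : Finset (Fin n)) (hsupp : ∀ i, i ∈ S ↔ u₀ i ≠ 0)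
    (hSne : S.Nonempty) (hcard : S.card ≤ s)
    (hbound : δ ^ 2 < S.inf' hSne (fun i => |u₀ i|) / (2 * norm2 u₀))
    (w₀ : Fin m → ℝ) (r₀ : Fin n → ℝ)
    (hr₀ : r₀ = (Q.mulVec w₀ + u₀) - Q.mulVec (Qᵀ.mulVec (Q.mulVec w₀ + u₀))) :
    ∀ i ∈ S, ∀ j ∉ S, |r₀ j| < |r₀ i| :=
  stmt10_general Q hQ δ hδ0 hPA u₀ S hsupp hSne hcard hbound w₀ r₀ hr₀
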